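/- arXiv:2212.07915 — 2 statements merged into one kernel-verified Lean document; each statement's English description precedes it below -/
import Mathlib

section
/- Let 𝔤 be a finite-dimensional real semisimple Lie algebra of compact type and even rank, 𝔱 ⊆ 𝔤 a maximal abelian subalgebra, I a Samelson complex structure on 𝔤 relative to 𝔱, and g a left-invariant I-Hermitian metric on 𝔤 that is SKT. Let K ⊆ Aut(𝔤) be the closure of {exp(ad H) : H ∈ 𝔱} (a compact abelian group, realizing the right action of the maximal torus T), with Haar probability measure μ, and define h(u,v) = ∫_K g(k·u, k·v) dμ(k). Then h is an inner product on 𝔤 that is I-Hermitian, right T-invariant (i.e., ad(𝔱)-invariant), and SKT. -/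
/-!
STATEMENT 0: symmetrization of an SKT metric by the right torus action.  `K` is the closure of
`{exp (ad H) : H ∈ 𝔱}` inside `End ℝ 𝔤` (a compact abelian group of automorphisms), `μ` its
Haar probability measure (characterized by translation invariance and being supported on `K`),
and `h (u, v) = ∫_K g (k u, k v) dμ(k)`.  Then `h` is an `I`-Hermitian, right `T`-invariant
(i.e. `ad 𝔱`-invariant) inner product which is still SKT.
-/

namespace Stmt0

variable {L : Type*} [LieRing L]

/-- Chevalley–Eilenberg differential of a (left-invariant) 2-form. -/
def dCE2 {A : Type*} [AddCommGroup A] (F : L → L → A) : L → L → L → A :=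
  fun X Y Z => F ⁅X, Y⁆ Z + F ⁅Y, Z⁆ X + F ⁅Z, X⁆ Y

/-- Chevalley–Eilenberg differential of a (left-invariant) 3-form. -/
def dCE3 {A : Type*} [AddCommGroup A] (η : L → L → L → A) : L → L → L → L → A :=
  fun X Y Z W =>
    - η ⁅X, Y⁆ Z W + η ⁅X, Z⁆ Y W - η ⁅X, W⁆ Y Z
      - η ⁅Y, Z⁆ X W + η ⁅Y, W⁆ X Z - η ⁅Z, W⁆ X Y

variable {𝔤 : Type*} [LieRing 𝔤] [LieAlgebra ℝ 𝔤]

/-- A Samelson complex structure on `𝔤` relative to a maximal abelian subalgebra `𝔱`. -/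
def IsSamelson (𝔱 : LieSubalgebra ℝ 𝔤) (I : 𝔤 →ₗ[ℝ] 𝔤) : Prop :=
  (∀ X, I (I X) = -X) ∧
  (∀ H ∈ 𝔱, I H ∈ 𝔱) ∧
  (∀ H ∈ 𝔱, ∀ X, I ⁅H, X⁆ = ⁅H, I X⁆) ∧
  (∀ X Y : 𝔤, ⁅I X, I Y⁆ - ⁅X, Y⁆ - I ⁅I X, Y⁆ - I ⁅X, I Y⁆ = 0)

/-- SKT condition `d(d^cF) = 0` for a (not necessarily bilinear-packaged) metric `h`,
where `F(X,Y) = h(IX,Y)` and `d^cF(X,Y,Z) = -dF(IX,IY,IZ)`. -/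
def IsSKTfun (I : 𝔤 →ₗ[ℝ] 𝔤) (h : 𝔤 → 𝔤 → ℝ) : Prop :=
  ∀ X Y Z W : 𝔤,
    dCE3 (fun a b c => - dCE2 (fun u v => h (I u) v) (I a) (I b) (I c)) X Y Z W = 0

/-!
Every element of `K` is a limit of maps `exp (ad H)`, `H ∈ 𝔱`, which commute with `I` and, since
`ad H` is a derivation that is skew for the Killing form, are Lie algebra automorphisms preserving
the Killing form; these closed conditions pass to `K`. Hence `K` acts by isometries of the Killing
norm, so the integrands `g (k ·) (k ·)` are bounded, and each of them is again `I`-Hermitian, SKT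
and positive definite, conditions that survive averaging. Right invariance of `μ` makes `h`
invariant under `exp (t • ad H)`; differentiating at `t = 0` gives `ad 𝔱`-invariance.
-/

section ExpOfDerivation

open NormedSpace

variable {E F G : Type*} [NormedAddCommGroup E] [NormedSpace ℝ E] [CompleteSpace E]
  [NormedAddCommGroup F] [NormedSpace ℝ F] [CompleteSpace F]
  [NormedAddCommGroup G] [NormedSpace ℝ G]

theorem hasDerivAt_exp_smul_apply (A : E →L[ℝ] E) (x : E) (t : ℝ) :
    HasDerivAt (fun s : ℝ => exp (s • A) x) (A (exp (t • A) x)) t := by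
  simpa using (hasDerivAt_exp_smul_const' (𝕂 := ℝ) A t).clm_apply (hasDerivAt_const t x)

theorem exp_apply_bilin_of_leibniz [CompleteSpace G] (β : E →L[ℝ] F →L[ℝ] G) (A : E →L[ℝ] E)
    (B : F →L[ℝ] F) (C : G →L[ℝ] G) (hβ : ∀ x y, C (β x y) = β (A x) y + β x (B y))
    (x : E) (y : F) :
    exp C (β x y) = β (exp A x) (exp B y) := by
  set f : ℝ → G := fun s => exp ((1 - s) • C) (β (exp (s • A) x) (exp (s • B) y))
  have hf : ∀ t, HasDerivAt f 0 t := by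
    intro t
    have hβt : HasDerivAt (fun s : ℝ => β (exp (s • A) x) (exp (s • B) y))
        (C (β (exp (t • A) x) (exp (t • B) y))) t := by
      rw [hβ]
      exact (β.hasFDerivAt.comp_hasDerivAt t (hasDerivAt_exp_smul_apply A x t)).clm_apply
        (hasDerivAt_exp_smul_apply B y t)
    have hexp := (hasDerivAt_exp_smul_const (𝕂 := ℝ) C (1 - t)).scomp t
      ((hasDerivAt_id t).const_sub 1)
    simpa [Function.comp_def] using hexp.clm_apply hβt
  have hconst := is_const_of_deriv_eq_zero (fun t => (hf t).differentiableAt)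
    (fun t => (hf t).deriv) 0 1
  simpa [f] using hconst

theorem _root_.ContinuousLinearMap.apply_add_apply_eq_zero_of_exp_smul_invariant
    (β : E →L[ℝ] E →L[ℝ] G) (A : E →L[ℝ] E) (x y : E)
    (hA : ∀ t : ℝ, β (exp (t • A) x) (exp (t • A) y) = β x y) :
    β (A x) y + β x (A y) = 0 := by
  have hderiv := (β.hasFDerivAt.comp_hasDerivAt 0 (hasDerivAt_exp_smul_apply A x 0)).clm_apply
    (hasDerivAt_exp_smul_apply A y 0)
  simp only [Function.comp_def, hA, zero_smul, exp_zero, one_apply_eq_self] at hderiv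
  exact hderiv.unique (hasDerivAt_const 0 _)

theorem map_exp_of_continuous {𝔸 𝔹 : Type*} [NormedRing 𝔸] [NormedAlgebra ℝ 𝔸] [CompleteSpace 𝔸]
    [Ring 𝔹] [Algebra ℝ 𝔹] [TopologicalSpace 𝔹] [IsTopologicalRing 𝔹] [T2Space 𝔹]
    (f : 𝔸 →ₐ[ℝ] 𝔹) (hf : Continuous f) (x : 𝔸) : f (exp x) = exp (f x) := by
  rw [exp_eq_tsum ℝ, exp_eq_tsum ℝ]
  refine ((expSeries_summable' (𝕂 := ℝ) x).hasSum.map f hf).tsum_eq.symm.trans ?_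
  simp

end ExpOfDerivation

section EndomorphismAlgebra

open NormedSpace MeasureTheory

variable {E : Type*} [NormedAddCommGroup E] [NormedSpace ℝ E] [FiniteDimensional ℝ E]
  [TopologicalSpace (Module.End ℝ E)] [IsTopologicalRing (Module.End ℝ E)]
  [ContinuousSMul ℝ (Module.End ℝ E)] [T2Space (Module.End ℝ E)]

theorem continuous_end_apply (x : E) : Continuous fun k : Module.End ℝ E => k x :=
  LinearMap.continuous_of_finiteDimensional (LinearMap.applyₗ x)

theorem exp_apply_eq_exp_toContinuousLinearMap (A : Module.End ℝ E) (x : E) :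
    exp A x = exp (LinearMap.toContinuousLinearMap A) x := by
  let Ψ := Module.End.toContinuousLinearMap (𝕜 := ℝ) E
  have hΨ : Continuous Ψ.symm := LinearMap.continuous_of_finiteDimensional
    (LinearMap.toContinuousLinearMap (𝕜 := ℝ) (E := E) (F' := E)).symm.toLinearMap
  exact congr($(map_exp_of_continuous Ψ.symm.toAlgHom hΨ (Ψ A)) x).symm

theorem _root_.IsBilinearMap.apply_add_apply_eq_zero_of_exp_smul_invariant {F : Type*}
    [NormedAddCommGroup F] [NormedSpace ℝ F] {f : E → E → F} (hf : IsBilinearMap ℝ f)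
    (A : Module.End ℝ E) (hA : ∀ t : ℝ, ∀ x y, f (exp (t • A) x) (exp (t • A) y) = f x y)
    (x y : E) : f (A x) y + f x (A y) = 0 :=
  hf.toContinuousBilinearMap.apply_add_apply_eq_zero_of_exp_smul_invariant
    (LinearMap.toContinuousLinearMap A) x y fun t => by
      simpa [exp_apply_eq_exp_toContinuousLinearMap] using hA t x y

theorem continuous_bilin_end_apply {F : Type*} [NormedAddCommGroup F] [NormedSpace ℝ F]
    (g : E →ₗ[ℝ] E →ₗ[ℝ] F) (u v : E) :
    Continuous fun k : Module.End ℝ E => g (k u) (k v) :=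
  g.toContinuousBilinearMap.continuous₂.comp
    ((continuous_end_apply u).prodMk (continuous_end_apply v))

variable [MeasurableSpace (Module.End ℝ E)] [BorelSpace (Module.End ℝ E)]
  {μ : Measure (Module.End ℝ E)}

theorem integrable_bilinForm_end_apply [IsFiniteMeasure μ] (hiso : ∀ᵐ k ∂μ, ∀ x, ‖k x‖ = ‖x‖)
    (g : LinearMap.BilinForm ℝ E) (u v : E) :
    Integrable (fun k : Module.End ℝ E => g (k u) (k v)) μ :=
  Integrable.of_bound (continuous_bilin_end_apply g u v).aestronglyMeasurable
    (‖g.toContinuousBilinearMap‖ * ‖u‖ * ‖v‖) <| hiso.mono fun k hk => by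
      simpa only [hk, LinearMap.toContinuousBilinearMap_apply]
        using g.toContinuousBilinearMap.le_opNorm₂ (k u) (k v)

theorem isBilinearMap_integral_bilinForm_end_apply [IsFiniteMeasure μ]
    (hiso : ∀ᵐ k ∂μ, ∀ x, ‖k x‖ = ‖x‖) (g : LinearMap.BilinForm ℝ E) :
    IsBilinearMap ℝ fun u v => ∫ k, g (k u) (k v) ∂μ where
  add_left x₁ x₂ y := by
    simp only [map_add, LinearMap.add_apply]
    exact integral_add (integrable_bilinForm_end_apply hiso g _ _)
      (integrable_bilinForm_end_apply hiso g _ _)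
  smul_left c x y := by simp only [map_smul, LinearMap.smul_apply, integral_smul]
  add_right x y₁ y₂ := by
    simp only [map_add]
    exact integral_add (integrable_bilinForm_end_apply hiso g _ _)
      (integrable_bilinForm_end_apply hiso g _ _)
  smul_right c x y := by simp only [map_smul, integral_smul]

theorem integral_bilinForm_end_apply_self_pos [IsFiniteMeasure μ] [NeZero μ]
    (hiso : ∀ᵐ k ∂μ, ∀ x, ‖k x‖ = ‖x‖) {g : LinearMap.BilinForm ℝ E}
    (hg : ∀ x, x ≠ 0 → 0 < g x x) {x : E} (hx : x ≠ 0) : 0 < ∫ k, g (k x) (k x) ∂μ := by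
  have hpos : ∀ᵐ k ∂μ, 0 < g (k x) (k x) := hiso.mono fun k hk =>
    hg _ fun h0 => hx (norm_eq_zero.1 (hk x ▸ norm_eq_zero.2 h0))
  rw [integral_pos_iff_support_of_nonneg_ae (hpos.mono fun _ => le_of_lt)
    (integrable_bilinForm_end_apply hiso g x x)]
  refine pos_iff_ne_zero.2 fun h0 => NeZero.ne μ (ae_eq_bot.1 ?_)
  refine Filter.eventually_false_iff_eq_bot.1 ?_
  exact (hpos.and (measure_eq_zero_iff_ae_notMem.1 h0)).mono fun k hk => hk.2 hk.1.ne'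

end EndomorphismAlgebra

theorem integral_comp_mul_right_of_map_eq {M F : Type*} [Monoid M] [TopologicalSpace M]
    [ContinuousMul M] [MeasurableSpace M] [BorelSpace M] [NormedAddCommGroup F] [NormedSpace ℝ F]
    {μ : MeasureTheory.Measure M} {k₀ : M} (hμ : μ.map (· * k₀) = μ) {f : M → F}
    (hf : MeasureTheory.AEStronglyMeasurable f μ) :
    ∫ k, f (k * k₀) ∂μ = ∫ k, f k ∂μ := by
  rw [← MeasureTheory.integral_map (continuous_mul_const k₀).measurable.aemeasurable
    (hμ.symm ▸ hf), hμ]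

section SKT

open MeasureTheory

theorem IsSKTfun.comp {I : 𝔤 →ₗ[ℝ] 𝔤} {g : 𝔤 → 𝔤 → ℝ} (hg : IsSKTfun I g) {k : 𝔤 →ₗ[ℝ] 𝔤}
    (hkI : ∀ x, k (I x) = I (k x)) (hk : ∀ x y, k ⁅x, y⁆ = ⁅k x, k y⁆) :
    IsSKTfun I fun u v => g (k u) (k v) := by
  intro X Y Z W
  have := hg (k X) (k Y) (k Z) (k W)
  simp only [dCE3, dCE2] at this ⊢
  simpa only [hkI, hk] using this

variable {α : Type*} [MeasurableSpace α] {μ : Measure α}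

theorem integral_dCE2 {F : α → L → L → ℝ} (hF : ∀ u v, Integrable (fun a => F a u v) μ)
    (X Y Z : L) :
    ∫ a, dCE2 (F a) X Y Z ∂μ = dCE2 (fun u v => ∫ a, F a u v ∂μ) X Y Z := by
  simp only [dCE2]
  rw [integral_add, integral_add] <;> fun_prop

theorem integral_dCE3 {η : α → L → L → L → ℝ} (hη : ∀ u v w, Integrable (fun a => η a u v w) μ)
    (X Y Z W : L) :
    ∫ a, dCE3 (η a) X Y Z W ∂μ = dCE3 (fun u v w => ∫ a, η a u v w ∂μ) X Y Z W := by
  simp only [dCE3]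
  rw [integral_sub, integral_add, integral_sub, integral_sub, integral_add, integral_neg]
  all_goals fun_prop

theorem IsSKTfun.integral {I : 𝔤 →ₗ[ℝ] 𝔤} {F : α → 𝔤 → 𝔤 → ℝ}
    (hF : ∀ u v, Integrable (fun a => F a u v) μ) (hskt : ∀ᵐ a ∂μ, IsSKTfun I (F a)) :
    IsSKTfun I fun u v => ∫ a, F a u v ∂μ := by
  intro X Y Z W
  have hη : ∀ u v w, Integrable
      (fun a => -dCE2 (fun u v => F a (I u) v) (I u) (I v) (I w)) μ := by
    intro u v w
    simp only [dCE2]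
    fun_prop
  calc _ = ∫ a, dCE3 (fun u v w => -dCE2 (fun u v => F a (I u) v) (I u) (I v) (I w)) X Y Z W ∂μ :=
        by simp only [integral_dCE3 hη, integral_neg, integral_dCE2 fun u v => hF (I u) v]
    _ = 0 := integral_eq_zero_of_ae (hskt.mono fun a ha => ha X Y Z W)

end SKT

open NormedSpace in
theorem closure_exp_ad_subset [Module.Finite ℝ 𝔤] [TopologicalSpace (Module.End ℝ 𝔤)]
    [IsTopologicalRing (Module.End ℝ 𝔤)] [ContinuousSMul ℝ (Module.End ℝ 𝔤)]
    [T2Space (Module.End ℝ 𝔤)] {S : Set 𝔤} {I : 𝔤 →ₗ[ℝ] 𝔤}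
    (hSI : ∀ H ∈ S, ∀ X, I ⁅H, X⁆ = ⁅H, I X⁆) :
    closure {k : Module.End ℝ 𝔤 | ∃ H ∈ S, k = exp (LieAlgebra.ad ℝ 𝔤 H)} ⊆
      {k | (∀ x y, killingForm ℝ 𝔤 (k x) (k y) = killingForm ℝ 𝔤 x y) ∧
        (∀ x, k (I x) = I (k x)) ∧ ∀ x y, k ⁅x, y⁆ = ⁅k x, k y⁆} := by
  -- Any norm will do for differentiating `exp`; transport one from a basis.
  let e := (Module.finBasis ℝ 𝔤).equivFun
  let : NormedAddCommGroup 𝔤 := NormedAddCommGroup.induced 𝔤 _ e e.injective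
  let : NormedSpace ℝ 𝔤 := NormedSpace.induced ℝ 𝔤 _ e
  let bracket : 𝔤 →ₗ[ℝ] 𝔤 →ₗ[ℝ] 𝔤 := LieAlgebra.ad ℝ 𝔤
  refine closure_minimal ?_ ?_
  · rintro _ ⟨H, hH, rfl⟩
    let A := LinearMap.toContinuousLinearMap (LieAlgebra.ad ℝ 𝔤 H)
    have hcomm : Commute (LieAlgebra.ad ℝ 𝔤 H) I := LinearMap.ext fun X => (hSI H hH X).symm
    refine ⟨fun x y => ?_, fun x => congr($(hcomm.exp_left.eq) x), fun x y => ?_⟩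
    · have := exp_apply_bilin_of_leibniz (killingForm ℝ 𝔤).toContinuousBilinearMap A A 0
        (fun x y => by simp [A, LieModule.traceForm_apply_lie_apply']) x y
      simpa [exp_apply_eq_exp_toContinuousLinearMap] using this.symm
    · simpa [exp_apply_eq_exp_toContinuousLinearMap, bracket] using
        exp_apply_bilin_of_leibniz bracket.toContinuousBilinearMap A A A (leibniz_lie H) x y
  · simp only [Set.ofPred_and, Set.ofPred_forall]
    refine .inter (isClosed_iInter fun x => isClosed_iInter fun y =>
      isClosed_eq (continuous_bilin_end_apply _ x y) continuous_const) (.inter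
        (isClosed_iInter fun x => isClosed_eq (continuous_end_apply _)
          (I.continuous_of_finiteDimensional.comp (continuous_end_apply x)))
        (isClosed_iInter fun x => isClosed_iInter fun y =>
          isClosed_eq (continuous_end_apply _) (continuous_bilin_end_apply bracket x y)))

noncomputable abbrev killingInnerProductCore [Module.Finite ℝ 𝔤]
    (hcompact : ∀ X : 𝔤, X ≠ 0 → killingForm ℝ 𝔤 X X < 0) : InnerProductSpace.Core ℝ 𝔤 where
  inner x y := -killingForm ℝ 𝔤 x y
  conj_inner_symm x y := by simp [LieModule.traceForm_comm]
  re_inner_nonneg x := by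
    rcases eq_or_ne x 0 with rfl | hx
    · simp
    · simpa using (hcompact x hx).le
  add_left x y z := by simp only [map_add, LinearMap.add_apply, neg_add]
  smul_left x y r := by simp
  definite x hx := by_contra fun h0 => (hcompact x h0).ne (neg_eq_zero.1 hx)

open MeasureTheory in
theorem statement0_general
    [Module.Finite ℝ 𝔤]
    (hcompact : ∀ X : 𝔤, X ≠ 0 → killingForm ℝ 𝔤 X X < 0)
    (𝔱 : LieSubalgebra ℝ 𝔤)
    (I : 𝔤 →ₗ[ℝ] 𝔤) (hI : IsSamelson 𝔱 I)
    -- g is a left-invariant I-Hermitian SKT metric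
    (g : LinearMap.BilinForm ℝ 𝔤)
    (hsymm : ∀ X Y : 𝔤, g X Y = g Y X)
    (hpos : ∀ X : 𝔤, X ≠ 0 → 0 < g X X)
    (hherm : ∀ X Y : 𝔤, g (I X) (I Y) = g X Y)
    (hSKT : IsSKTfun I fun X Y => g X Y)
    -- the (canonical) topology on End ℝ 𝔤 and its Borel σ-algebra
    [TopologicalSpace (Module.End ℝ 𝔤)] [IsTopologicalRing (Module.End ℝ 𝔤)]
    [ContinuousSMul ℝ (Module.End ℝ 𝔤)] [T2Space (Module.End ℝ 𝔤)]
    [MeasurableSpace (Module.End ℝ 𝔤)] [BorelSpace (Module.End ℝ 𝔤)]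
    -- K is the closure of {exp (ad H) : H ∈ 𝔱}
    (K : Set (Module.End ℝ 𝔤))
    (hK : K = closure
      {k : Module.End ℝ 𝔤 | ∃ H ∈ 𝔱, k = NormedSpace.exp ((LieAlgebra.ad ℝ 𝔤) H)})
    -- μ is the Haar probability measure of the compact abelian group K:
    -- it is a probability measure carried by K and invariant under all translations by
    -- elements of K
    (μ : Measure (Module.End ℝ 𝔤)) [IsProbabilityMeasure μ]
    (hμK : μ Kᶜ = 0)
    (hμinv : ∀ k ∈ K, μ.map (fun x => k * x) = μ ∧ μ.map (fun x => x * k) = μ)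
    -- h is the symmetrization of g
    (h : 𝔤 → 𝔤 → ℝ)
    (hdef : ∀ u v : 𝔤, h u v = ∫ k, g (k u) (k v) ∂μ) :
    -- conclusion: h is an I-Hermitian, right T-invariant inner product which is SKT
    (∀ (a : ℝ) (X X' Y : 𝔤), h (a • X + X') Y = a * h X Y + h X' Y) ∧
    (∀ X Y : 𝔤, h X Y = h Y X) ∧
    (∀ X : 𝔤, X ≠ 0 → 0 < h X X) ∧
    (∀ X Y : 𝔤, h (I X) (I Y) = h X Y) ∧
    (∀ H ∈ 𝔱, ∀ X Y : 𝔤, h ⁅H, X⁆ Y + h X ⁅H, Y⁆ = 0) ∧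
    IsSKTfun I h := by
  obtain ⟨-, -, hIad, -⟩ := hI
  obtain rfl : h = fun u v => ∫ k, g (k u) (k v) ∂μ := funext fun u => funext (hdef u)
  subst hK
  have hKaut := closure_exp_ad_subset (S := (𝔱 : Set 𝔤)) (I := I) hIad
  have hKae : ∀ᵐ k ∂μ, k ∈ closure _ := mem_ae_iff.2 hμK
  let : NormedAddCommGroup 𝔤 := (killingInnerProductCore hcompact).toNormedAddCommGroup
  let : InnerProductSpace ℝ 𝔤 := .ofCore (killingInnerProductCore hcompact).toCore
  have hiso : ∀ᵐ k ∂μ, ∀ x, ‖k x‖ = ‖x‖ := hKae.mono fun k hk x => by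
    rw [← sq_eq_sq₀ (norm_nonneg _) (norm_nonneg _), ← real_inner_self_eq_norm_sq,
      ← real_inner_self_eq_norm_sq]
    exact congrArg Neg.neg ((hKaut hk).1 x x)
  have hbil := isBilinearMap_integral_bilinForm_end_apply hiso g
  refine ⟨fun a X X' Y => ?_, fun X Y => integral_congr_ae (ae_of_all _ fun k => hsymm _ _),
    fun X hX => integral_bilinForm_end_apply_self_pos hiso hpos hX,
    fun X Y => integral_congr_ae (hKae.mono fun k hk => by simp only [(hKaut hk).2.1, hherm]),
    fun H hH X Y => hbil.apply_add_apply_eq_zero_of_exp_smul_invariant (LieAlgebra.ad ℝ 𝔤 H)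
      (fun t x y => ?_) X Y,
    IsSKTfun.integral (integrable_bilinForm_end_apply hiso g)
      (hKae.mono fun k hk => hSKT.comp (hKaut hk).2.1 (hKaut hk).2.2)⟩
  · simp only [hbil.add_left, hbil.smul_left, smul_eq_mul]
  · have hμt := (hμinv (NormedSpace.exp (t • LieAlgebra.ad ℝ 𝔤 H))
      (subset_closure ⟨t • H, 𝔱.smul_mem t hH, by rw [map_smul]⟩)).2
    exact integral_comp_mul_right_of_map_eq hμt
      (continuous_bilin_end_apply g x y).aestronglyMeasurable

open MeasureTheory in
theorem statement0
    [Module.Finite ℝ 𝔤] [LieAlgebra.IsSemisimple ℝ 𝔤]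
    (hcompact : ∀ X : 𝔤, X ≠ 0 → killingForm ℝ 𝔤 X X < 0)
    (𝔱 : LieSubalgebra ℝ 𝔤) (h𝔱ab : IsLieAbelian ↥𝔱)
    (h𝔱max : ∀ 𝔰 : LieSubalgebra ℝ 𝔤, IsLieAbelian ↥𝔰 → 𝔱 ≤ 𝔰 → 𝔰 = 𝔱)
    (hrank : Even (Module.finrank ℝ ↥𝔱))
    (I : 𝔤 →ₗ[ℝ] 𝔤) (hI : IsSamelson 𝔱 I)
    -- g is a left-invariant I-Hermitian SKT metric
    (g : LinearMap.BilinForm ℝ 𝔤)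
    (hsymm : ∀ X Y : 𝔤, g X Y = g Y X)
    (hpos : ∀ X : 𝔤, X ≠ 0 → 0 < g X X)
    (hherm : ∀ X Y : 𝔤, g (I X) (I Y) = g X Y)
    (hSKT : IsSKTfun I fun X Y => g X Y)
    -- the (canonical) topology on End ℝ 𝔤 and its Borel σ-algebra
    [TopologicalSpace (Module.End ℝ 𝔤)] [IsTopologicalRing (Module.End ℝ 𝔤)]
    [ContinuousSMul ℝ (Module.End ℝ 𝔤)] [T2Space (Module.End ℝ 𝔤)]
    [MeasurableSpace (Module.End ℝ 𝔤)] [BorelSpace (Module.End ℝ 𝔤)]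
    -- K is the closure of {exp (ad H) : H ∈ 𝔱}
    (K : Set (Module.End ℝ 𝔤))
    (hK : K = closure
      {k : Module.End ℝ 𝔤 | ∃ H ∈ 𝔱, k = NormedSpace.exp ((LieAlgebra.ad ℝ 𝔤) H)})
    -- μ is the Haar probability measure of the compact abelian group K:
    -- it is a probability measure carried by K and invariant under all translations by
    -- elements of K
    (μ : Measure (Module.End ℝ 𝔤)) [IsProbabilityMeasure μ]
    (hμK : μ Kᶜ = 0)
    (hμinv : ∀ k ∈ K, μ.map (fun x => k * x) = μ ∧ μ.map (fun x => x * k) = μ)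
    -- h is the symmetrization of g
    (h : 𝔤 → 𝔤 → ℝ)
    (hdef : ∀ u v : 𝔤, h u v = ∫ k, g (k u) (k v) ∂μ) :
    -- conclusion: h is an I-Hermitian, right T-invariant inner product which is SKT
    (∀ (a : ℝ) (X X' Y : 𝔤), h (a • X + X') Y = a * h X Y + h X' Y) ∧
    (∀ X Y : 𝔤, h X Y = h Y X) ∧
    (∀ X : 𝔤, X ≠ 0 → 0 < h X X) ∧
    (∀ X Y : 𝔤, h (I X) (I Y) = h X Y) ∧
    (∀ H ∈ 𝔱, ∀ X Y : 𝔤, h ⁅H, X⁆ Y + h X ⁅H, Y⁆ = 0) ∧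
    IsSKTfun I h :=
  statement0_general hcompact 𝔱 I hI g hsymm hpos hherm hSKT K hK μ hμK hμinv h hdef

end Stmt0
end

section
/- Let r ≤ p be positive integers, X an r×p real matrix of rank r, C a symmetric invertible r×r real matrix, λ ∈ ℝ^p with λ_j > 0 for all j, and N ∈ ℝ^r. Suppose that (1) λ_j = 1 + Σ_{k=1}^r Σ_{l=1}^r N_k C_{kl} X_{lj} for all j = 1,…,p, and (2) Σ_{j=1}^p X_{ij} (1 − 1/λ_j) = 0 for all i = 1,…,r. Then N = 0 and λ_j = 1 for all j. -/
/-!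
STATEMENT 9: the algebraic core of the SKT+CYT ⇒ Bismut-flat theorem.  If `X` is an `r × p`
real matrix of rank `r` (`r ≤ p`), `C` a symmetric invertible `r × r` real matrix, `λ ∈ ℝᵖ`
positive, `N ∈ ℝʳ`, and (1) `λ j = 1 + ∑ k l, N k * C k l * X l j` for all `j`, and
(2) `∑ j, X i j * (1 - 1/λ j) = 0` for all `i`, then `N = 0` and `λ ≡ 1`.
-/

theorem statement9 (r p : ℕ) (hr : 0 < r) (hp : 0 < p) (hrp : r ≤ p)
    (X : Matrix (Fin r) (Fin p) ℝ) (hrank : X.rank = r)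
    (C : Matrix (Fin r) (Fin r) ℝ) (hCsymm : C.IsSymm) (hCinv : IsUnit C)
    (lam : Fin p → ℝ) (hlam : ∀ j, 0 < lam j)
    (N : Fin r → ℝ)
    (h1 : ∀ j, lam j = 1 + ∑ k, ∑ l, N k * C k l * X l j)
    (h2 : ∀ i, ∑ j, X i j * (1 - 1 / lam j) = 0) :
    N = 0 ∧ ∀ j, lam j = 1 := by
  set v : Fin p → ℝ := fun j => ∑ k, ∑ l, N k * C k l * X l j with hv
  have hvlam : ∀ j, v j = lam j - 1 := fun j => by rw [h1 j]; ring
  have hfrac : ∀ j, 1 - 1 / lam j = v j / lam j := fun j => by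
    have h0 := (hlam j).ne'
    rw [hvlam j]; field_simp
  have h2' : ∀ i, ∑ j, X i j * (v j / lam j) = 0 := fun i => by
    rw [← h2 i]; exact Finset.sum_congr rfl fun j _ => by rw [hfrac j]
  have expand : ∀ (t : ℝ) (j : Fin p),
      v j * t = ∑ k, ∑ l, N k * C k l * (X l j * t) := by
    intro t j
    rw [hv]
    simp only [Finset.sum_mul]
    exact Finset.sum_congr rfl fun k _ => Finset.sum_congr rfl fun l _ => by ring
  -- key: ∑ j, v j * (v j / lam j) = 0
  have hS : ∑ j, v j * (v j / lam j) = 0 := by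
    calc ∑ j, v j * (v j / lam j)
        = ∑ j, ∑ k, ∑ l, N k * C k l * (X l j * (v j / lam j)) :=
          Finset.sum_congr rfl fun j _ => expand (v j / lam j) j
      _ = ∑ k, ∑ l, N k * C k l * ∑ j, X l j * (v j / lam j) := by
          rw [Finset.sum_comm]
          refine Finset.sum_congr rfl fun k _ => ?_
          rw [Finset.sum_comm]
          exact Finset.sum_congr rfl fun l _ => (Finset.mul_sum _ _ _).symm
      _ = 0 := by simp [h2']
  have hv0 : ∀ j, v j = 0 := by
    have hnn : ∀ j ∈ Finset.univ, 0 ≤ v j * (v j / lam j) := fun j _ => by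
      have hl := hlam j
      have : v j * (v j / lam j) = v j ^ 2 / lam j := by ring
      rw [this]; positivity
    intro j
    have hz := (Finset.sum_eq_zero_iff_of_nonneg hnn).mp hS j (Finset.mem_univ j)
    have hl := hlam j
    by_contra h
    have hgt : 0 < v j * (v j / lam j) := by
      have : v j * (v j / lam j) = v j ^ 2 / lam j := by ring
      rw [this]; positivity
    linarith
  have hlam1 : ∀ j, lam j = 1 := fun j => by
    have := hvlam j; have := hv0 j; linarith
  -- now w := N ᵥ* C satisfies w ᵥ* X = 0
  set w : Fin r → ℝ := Matrix.vecMul N C with hw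
  have hwX : Matrix.vecMul w X = 0 := by
    funext j
    have h0 := hv0 j
    simp only [hv] at h0
    rw [Finset.sum_comm] at h0
    simp only [hw, Matrix.vecMul, dotProduct, Pi.zero_apply, Finset.sum_mul]
    exact h0
  have hXt : X.transpose.mulVec w = 0 := by
    rw [Matrix.mulVec_transpose]; exact hwX
  -- injectivity of mulVec of Xᵀ since rank Xᵀ = r
  have hrankT : X.transpose.rank = r := by rw [Matrix.rank_transpose]; exact hrank
  have hrn := LinearMap.finrank_range_add_finrank_ker (Matrix.mulVecLin X.transpose)
  have hrange : Module.finrank ℝ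
      (LinearMap.range (Matrix.mulVecLin X.transpose)) = r := hrankT
  rw [hrange, Module.finrank_fin_fun] at hrn
  have hker0 : Module.finrank ℝ
      (LinearMap.ker (Matrix.mulVecLin X.transpose)) = 0 := by omega
  have hker : LinearMap.ker (Matrix.mulVecLin X.transpose) = ⊥ :=
    Submodule.finrank_eq_zero.mp hker0
  have hw0 : w = 0 := by
    have hmem : w ∈ LinearMap.ker (Matrix.mulVecLin X.transpose) :=
      LinearMap.mem_ker.mpr (by rw [Matrix.mulVecLin_apply]; exact hXt)
    rw [hker] at hmem
    simpa using hmem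
  have hN : N = 0 := by
    obtain ⟨Ci⟩ := hCinv.nonempty_invertible
    have h := congrArg (fun u => Matrix.vecMul u (⅟C)) hw0
    simp only [hw, Matrix.vecMul_vecMul, Matrix.zero_vecMul] at h
    rwa [mul_invOf_self, Matrix.vecMul_one] at h
  exact ⟨hN, hlam1⟩
end
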